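/- A functor f : C → D between small categories is fully faithful if and only if the right Kan extension functor f_* : PSh(C) → PSh(D) is fully faithful. -/

import Mathlib

/-!
Restriction `f^*` along `fᵒᵖ` has both adjoints `f_!` and `f_*`, and in an adjoint triple the
left adjoint is fully faithful iff the right one is. If `f` is fully faithful, the counit
`f^* f_* ⟶ 𝟭` is an isomorphism, since a pointwise right Kan extension along a fully faithful
functor restricts back to the original presheaf. Conversely, `f_!` sends representables to
representables, `f_! ∘ yoneda ≅ yoneda ∘ f`, so if `f_!` is fully faithful then so is
`yoneda ∘ f`, hence `f`.
-/

open CategoryTheory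

universe w v₁ v₂ v₃ u₁ u₂ u₃

namespace CategoryTheory.Functor

variable {C : Type u₁} [Category.{v₁} C] {D : Type u₂} [Category.{v₂} D]

noncomputable def fullyFaithfulRan (L : C ⥤ D) [L.Full] [L.Faithful] (H : Type u₃)
    [Category.{v₃} H] [∀ F : C ⥤ H, L.HasPointwiseRightKanExtension F] :
    (L.ran : (C ⥤ H) ⥤ (D ⥤ H)).FullyFaithful :=
  (L.ranAdjunction H).fullyFaithfulROfIsIsoCounit

noncomputable def lanFullyFaithfulEquivRan (L : C ⥤ D) (H : Type u₃) [Category.{v₃} H]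
    [∀ F : C ⥤ H, L.HasLeftKanExtension F] [∀ F : C ⥤ H, L.HasRightKanExtension F] :
    (L.lan : (C ⥤ H) ⥤ (D ⥤ H)).FullyFaithful ≃ (L.ran : (C ⥤ H) ⥤ (D ⥤ H)).FullyFaithful :=
  (Adjunction.Triple.mk (L.lanAdjunction H) (L.ranAdjunction H)).fullyFaithfulEquiv

noncomputable def FullyFaithful.ofOpLan (f : C ⥤ D)
    [∀ P : Cᵒᵖ ⥤ Type max w v₁ v₂, f.op.HasLeftKanExtension P]
    (hf : (f.op.lan : (Cᵒᵖ ⥤ Type max w v₁ v₂) ⥤ (Dᵒᵖ ⥤ Type max w v₁ v₂)).FullyFaithful) :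
    f.FullyFaithful :=
  have hcomp : (f ⋙ uliftYoneda.{max w v₁}).FullyFaithful :=
    ((ULiftYoneda.fullyFaithful.{max w v₂} C).comp hf).ofIso
      (Presheaf.compULiftYonedaIsoULiftYonedaCompLan.{w} f).symm
  hcomp.ofCompFaithful

end CategoryTheory.Functor

/-- A functor `f : C ⥤ D` between small categories is fully faithful if and only if the
right Kan extension functor `f_* : PSh(C) ⥤ PSh(D)` on presheaf categories is fully
faithful. -/
theorem stmt_4 {C : Type u} [SmallCategory C] {D : Type u} [SmallCategory D]
    (f : C ⥤ D) :
    (f.Full ∧ f.Faithful) ↔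
      ((f.op.ran : (Cᵒᵖ ⥤ Type u) ⥤ (Dᵒᵖ ⥤ Type u)).Full ∧
        (f.op.ran : (Cᵒᵖ ⥤ Type u) ⥤ (Dᵒᵖ ⥤ Type u)).Faithful) := by
  constructor
  · rintro ⟨_, _⟩
    let hran := f.op.fullyFaithfulRan (Type u)
    exact ⟨hran.full, hran.faithful⟩
  · rintro ⟨_, _⟩
    let hf := Functor.FullyFaithful.ofOpLan.{u} f <|
      (f.op.lanFullyFaithfulEquivRan (Type u)).symm (.ofFullyFaithful _)
    exact ⟨hf.full, hf.faithful⟩
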